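/- arXiv:1610.00043 — 2 statements merged into one kernel-verified Lean document; each statement's English description precedes it below -/
import Mathlib

section
/- The graph 𝒢 constructed from a 4-regular graph G via an Eulerian orientation is 3-regular: its vertices are the directed edges of G_d, and each vertex (v_ℓ, v_m) has exactly 3 neighbors. -/
/-!
Write `e = (a, v)`. The edges sharing the head `v` with `e` are the other in-edge `(a', v)`.
Because `In(v)` and `Out(v)` both have two elements, the min/max rule is a bijection between
them, so `e` is paired with exactly one out-edge `(v, b)` at `v` and exactly one in-edge
`(c, a)` at `a`. The orientation has no loops and no 2-cycles, so these three edges are distinct.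
-/

open SimpleGraph

/-- The in-edge `(a, v)` is paired with the out-edge `(v, b)` at `v`:
either `(a,v) = min In(v)` and `(v,b) = min Out(v)`, or
`(a,v) = max In(v)` and `(v,b) = max Out(v)`. -/
def PairedAt {V : Type*} [LinearOrder V] (D : V → V → Prop) (v a b : V) : Prop :=
  D a v ∧ D v b ∧
    (((∀ a', D a' v → a ≤ a') ∧ (∀ b', D v b' → b ≤ b')) ∨
     ((∀ a', D a' v → a' ≤ a) ∧ (∀ b', D v b' → b' ≤ b)))

namespace Set

variable {α : Type*} {s : Set α}

theorem exists_ne_eq_pair_of_ncard_eq_two (h : s.ncard = 2) {a : α} (ha : a ∈ s) :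
    ∃ b, b ≠ a ∧ s = {a, b} := by
  obtain ⟨x, y, hxy, rfl⟩ := ncard_eq_two.mp h
  rcases ha with rfl | rfl
  · exact ⟨y, hxy.symm, rfl⟩
  · exact ⟨x, hxy, pair_comm _ _⟩

theorem exists_lt_eq_pair_of_ncard_eq_two [LinearOrder α] (h : s.ncard = 2) :
    ∃ x y, x < y ∧ s = {x, y} := by
  obtain ⟨x, y, hxy, rfl⟩ := ncard_eq_two.mp h
  rcases hxy.lt_or_gt with hlt | hlt
  · exact ⟨x, y, hlt, rfl⟩
  · exact ⟨y, x, hlt, pair_comm _ _⟩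

end Set

section PairedAt

variable {V : Type*} [LinearOrder V] {D : V → V → Prop} {v a b : V}

theorem pairedAt_flip : PairedAt (flip D) v b a ↔ PairedAt D v a b := by
  unfold PairedAt flip
  tauto

theorem pairedAt_iff_of_eq_pair {a₁ a₂ b₁ b₂ : V}
    (hIn : {u | D u v} = {a₁, a₂}) (ha : a₁ < a₂)
    (hOut : {u | D v u} = {b₁, b₂}) (hb : b₁ < b₂) :
    PairedAt D v a b ↔ a = a₁ ∧ b = b₁ ∨ a = a₂ ∧ b = b₂ := by
  have hIn' (x : V) : D x v ↔ x = a₁ ∨ x = a₂ := by simpa using Set.ext_iff.mp hIn x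
  have hOut' (x : V) : D v x ↔ x = b₁ ∨ x = b₂ := by simpa using Set.ext_iff.mp hOut x
  simp only [PairedAt, hIn', hOut', forall_eq_or_imp, forall_eq]
  constructor
  · rintro ⟨rfl | rfl, rfl | rfl, h | h⟩ <;> simp_all [not_le_of_gt ha, not_le_of_gt hb]
  · rintro (⟨rfl, rfl⟩ | ⟨rfl, rfl⟩) <;> simp [ha.le, hb.le]

theorem PairedAt.existsUnique_right (hin : {u | D u v}.ncard = 2)
    (hout : {u | D v u}.ncard = 2) (ha : D a v) : ∃! b, PairedAt D v a b := by
  obtain ⟨a₁, a₂, ha₁₂, hIn⟩ := Set.exists_lt_eq_pair_of_ncard_eq_two hin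
  obtain ⟨b₁, b₂, hb₁₂, hOut⟩ := Set.exists_lt_eq_pair_of_ncard_eq_two hout
  simp only [pairedAt_iff_of_eq_pair hIn ha₁₂ hOut hb₁₂]
  have ha' : a = a₁ ∨ a = a₂ := by simpa [hIn] using (show a ∈ {u | D u v} from ha)
  rcases ha' with rfl | rfl
  · exact ⟨b₁, by simp, by simp [ha₁₂.ne]⟩
  · exact ⟨b₂, by simp, by simp [ha₁₂.ne']⟩

theorem PairedAt.existsUnique_left (hin : {u | D u v}.ncard = 2)
    (hout : {u | D v u}.ncard = 2) (hb : D v b) : ∃! a, PairedAt D v a b := by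
  simpa only [pairedAt_flip] using
    PairedAt.existsUnique_right (D := flip D) (v := v) hout hin hb

end PairedAt

section DerivedGraph

variable {V : Type*} [LinearOrder V] {D : V → V → Prop}
  {𝒢 : SimpleGraph {p : V × V // D p.1 p.2}}

theorem image_val_neighborSet_eq (hD : ∀ u w, D u w → ¬ D w u)
    (hAdj : ∀ e f : {p : V × V // D p.1 p.2}, 𝒢.Adj e f ↔ e ≠ f ∧
      (e.1.2 = f.1.2 ∨
       (e.1.2 = f.1.1 ∧ PairedAt D e.1.2 e.1.1 f.1.2) ∨
       (f.1.2 = e.1.1 ∧ PairedAt D f.1.2 f.1.1 e.1.2)))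
    {a v a' b c : V} (hav : D a v) (hIn : {u | D u v} = {a, a'}) (ha' : a' ≠ a)
    (hb : PairedAt D v a b) (hb_unique : ∀ x, PairedAt D v a x → x = b)
    (hc : PairedAt D a c v) (hc_unique : ∀ x, PairedAt D a x v → x = c) :
    Subtype.val '' 𝒢.neighborSet ⟨(a, v), hav⟩ = {(a', v), (v, b), (c, a)} := by
  have hva : v ≠ a := by rintro rfl; exact hD _ _ hav hav
  ext ⟨p, q⟩
  simp only [Set.mem_image, Subtype.exists, exists_and_right, exists_eq_right, mem_neighborSet,
    hAdj, ne_eq, Subtype.mk.injEq, Prod.mk.injEq, exists_prop, Set.mem_insert_iff,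
    Set.mem_singleton_iff]
  have hIn' (x : V) : D x v ↔ x = a ∨ x = a' := by simpa using Set.ext_iff.mp hIn x
  constructor
  · rintro ⟨⟨hpq, hne⟩, rfl | ⟨rfl, hq⟩ | ⟨rfl, hp⟩⟩
    · rcases (hIn' p).mp hpq with rfl | rfl
      · exact absurd ⟨rfl, rfl⟩ hne
      · exact Or.inl ⟨rfl, rfl⟩
    · exact Or.inr (Or.inl ⟨rfl, hb_unique q hq⟩)
    · exact Or.inr (Or.inr ⟨hc_unique p hp, rfl⟩)
  · rintro (⟨rfl, rfl⟩ | ⟨rfl, rfl⟩ | ⟨rfl, rfl⟩)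
    · exact ⟨⟨(hIn' p).mpr (Or.inr rfl), fun h => ha' h.1.symm⟩, Or.inl rfl⟩
    · exact ⟨⟨hb.2.1, fun h => hva h.1.symm⟩, Or.inr (Or.inl ⟨rfl, hb⟩)⟩
    · exact ⟨⟨hc.1, fun h => hva h.2⟩, Or.inr (Or.inr ⟨rfl, hc⟩)⟩

end DerivedGraph

theorem derived_graph_is_cubic_general {V : Type*} [LinearOrder V]
    (G : SimpleGraph V) (D : V → V → Prop)
    (hDG : ∀ u v : V, D u v → G.Adj u v)
    (hor : ∀ u v : V, G.Adj u v → (D u v ↔ ¬ D v u))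
    (hin : ∀ v : V, {u : V | D u v}.ncard = 2)
    (hout : ∀ v : V, {u : V | D v u}.ncard = 2)
    (𝒢 : SimpleGraph {p : V × V // D p.1 p.2})
    (hAdj : ∀ e f : {p : V × V // D p.1 p.2}, 𝒢.Adj e f ↔ e ≠ f ∧
      (e.1.2 = f.1.2 ∨
       (e.1.2 = f.1.1 ∧ PairedAt D e.1.2 e.1.1 f.1.2) ∨
       (f.1.2 = e.1.1 ∧ PairedAt D f.1.2 f.1.1 e.1.2))) :
    ∀ e : {p : V × V // D p.1 p.2}, (𝒢.neighborSet e).ncard = 3 := by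
  rintro ⟨⟨a, v⟩, hav⟩
  have hD (u w : V) (h : D u w) : ¬ D w u := (hor u w (hDG u w h)).mp h
  obtain ⟨a', ha', hIn⟩ := Set.exists_ne_eq_pair_of_ncard_eq_two (hin v) hav
  obtain ⟨b, hb, hb_unique⟩ := PairedAt.existsUnique_right (hin v) (hout v) hav
  obtain ⟨c, hc, hc_unique⟩ := PairedAt.existsUnique_left (hin a) (hout a) hav
  rw [← Set.ncard_image_of_injective _ Subtype.val_injective,
    image_val_neighborSet_eq hD hAdj hav hIn ha' hb hb_unique hc hc_unique]
  have hvb : v ≠ b := by rintro rfl; exact hD _ _ hb.2.1 hb.2.1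
  have hva : v ≠ a := by rintro rfl; exact hD _ _ hav hav
  have hvc : v ≠ c := by rintro rfl; exact hD _ _ hav hc.1
  exact Set.ncard_eq_three.mpr ⟨_, _, _, by simp [hvb], by simp [hva], by simp [hvc], rfl⟩

/-- The graph `𝒢` obtained from an Eulerian orientation `D` of a 4-regular graph `G`
(with indegree and outdegree 2 at every vertex) is 3-regular: every vertex of `𝒢`
(a directed edge of `G_d`) has exactly 3 neighbors. -/
theorem derived_graph_is_cubic {V : Type*} [Fintype V] [LinearOrder V]
    (G : SimpleGraph V) (D : V → V → Prop)
    (hreg : ∀ v : V, (G.neighborSet v).ncard = 4)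
    (hDG : ∀ u v : V, D u v → G.Adj u v)
    (hor : ∀ u v : V, G.Adj u v → (D u v ↔ ¬ D v u))
    (hin : ∀ v : V, {u : V | D u v}.ncard = 2)
    (hout : ∀ v : V, {u : V | D v u}.ncard = 2)
    (𝒢 : SimpleGraph {p : V × V // D p.1 p.2})
    (hAdj : ∀ e f : {p : V × V // D p.1 p.2}, 𝒢.Adj e f ↔ e ≠ f ∧
      (e.1.2 = f.1.2 ∨
       (e.1.2 = f.1.1 ∧ PairedAt D e.1.2 e.1.1 f.1.2) ∨
       (f.1.2 = e.1.1 ∧ PairedAt D f.1.2 f.1.1 e.1.2))) :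
    ∀ e : {p : V × V // D p.1 p.2}, (𝒢.neighborSet e).ncard = 3 :=
  derived_graph_is_cubic_general G D hDG hor hin hout 𝒢 hAdj
end

section
/- The Petersen graph can be decomposed into five edge-disjoint paths on 4 vertices (P4 paths). -/
open SimpleGraph Finset

/-- The Petersen graph, as the Kneser graph `K(5,2)`. -/
def petersen : SimpleGraph {s : Finset (Fin 5) // s.card = 2} where
  Adj a b := Disjoint (a : Finset (Fin 5)) (b : Finset (Fin 5))
  symm := ⟨fun a b h => h.symm⟩
  loopless := ⟨by
    rintro ⟨s, hs⟩ h
    have : s = ∅ := by simpa using disjoint_self.mp h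
    simp [this] at hs⟩

instance : DecidableRel petersen.Adj := fun a b =>
  inferInstanceAs (Decidable (Disjoint (a : Finset (Fin 5)) (b : Finset (Fin 5))))

def IsP4EdgeSet {V : Type*} [DecidableEq V] (G : SimpleGraph V) (p : Finset (Sym2 V)) : Prop :=
  ∃ (a b : V) (w : G.Walk a b), w.IsPath ∧ w.length = 3 ∧ p = w.edges.toFinset

/-!
The rotation `i ↦ i + 1` of `Fin 5` (mod 5) induces an automorphism of the Petersen graph with
three edge orbits of size five: the outer cycle `{i, i+1} — {i+2, i+3}`, the inner pentagram
`{i, i+2} — {i+1, i+3}` and the spokes `{i, i+1} — {i+2, i+4}`. A path of length three with one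
edge in each orbit therefore has five rotates that are pairwise edge-disjoint and cover all edges.
-/

theorem IsP4EdgeSet.map {V W : Type*} [DecidableEq V] [DecidableEq W] {G : SimpleGraph V}
    {G' : SimpleGraph W} (f : G ↪g G') {p : Finset (Sym2 V)} (hp : IsP4EdgeSet G p) :
    IsP4EdgeSet G' (p.image (Sym2.map f)) := by
  obtain ⟨a, b, w, hw, hlen, rfl⟩ := hp
  exact ⟨f a, f b, w.map f.toHom, hw.map f.injective, by simp [hlen], by ext; simp [Walk.edges_map]⟩

def petersenRelabel (σ : Equiv.Perm (Fin 5)) : petersen ≃g petersen where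
  toFun s := ⟨s.1.map σ.toEmbedding, by simp [s.2]⟩
  invFun s := ⟨s.1.map σ.symm.toEmbedding, by simp [s.2]⟩
  left_inv s := by ext; simp
  right_inv s := by ext; simp
  map_rel_iff' := by simp [petersen]

def petersenVertex (a b : Fin 5) (h : a ≠ b := by decide) :
    {s : Finset (Fin 5) // s.card = 2} := ⟨{a, b}, card_pair h⟩

/-- Outer edge, spoke, inner edge. -/
def basePath : petersen.Walk (petersenVertex 2 3) (petersenVertex 1 3) :=
  .cons (by decide : petersen.Adj _ (petersenVertex 0 1)) <|
  .cons (by decide : petersen.Adj _ (petersenVertex 2 4)) <|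
  .cons (by decide : petersen.Adj _ (petersenVertex 1 3)) .nil

def rotatedPath (k : Fin 5) : Finset (Sym2 {s : Finset (Fin 5) // s.card = 2}) :=
  basePath.edges.toFinset.image (Sym2.map (petersenRelabel (Equiv.addRight k)))

theorem isP4EdgeSet_rotatedPath (k : Fin 5) : IsP4EdgeSet petersen (rotatedPath k) :=
  IsP4EdgeSet.map (petersenRelabel _).toEmbedding
    ⟨_, _, basePath, by rw [Walk.isPath_def]; decide, rfl, rfl⟩

theorem disjoint_rotatedPath {k l : Fin 5} : k ≠ l → Disjoint (rotatedPath k) (rotatedPath l) := by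
  revert k l
  decide

theorem card_image_rotatedPath : (univ.image rotatedPath).card = 5 := by
  decide

theorem biUnion_rotatedPath : (univ.image rotatedPath).biUnion id = petersen.edgeFinset := by
  decide

/-- The Petersen graph decomposes into five edge-disjoint paths on 4 vertices. -/
theorem petersen_P4_decomposition :
    ∃ P : Finset (Finset (Sym2 {s : Finset (Fin 5) // s.card = 2})),
      P.card = 5 ∧
      (∀ p ∈ P, IsP4EdgeSet petersen p) ∧
      (P : Set (Finset (Sym2 {s : Finset (Fin 5) // s.card = 2}))).PairwiseDisjoint id ∧
      P.biUnion id = petersen.edgeFinset := by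
  refine ⟨univ.image rotatedPath, card_image_rotatedPath, ?_, ?_, biUnion_rotatedPath⟩
  · simp only [mem_image, mem_univ, true_and, forall_exists_index, forall_apply_eq_imp_iff]
    exact isP4EdgeSet_rotatedPath
  · rintro _ hp _ hq hpq
    obtain ⟨k, -, rfl⟩ := mem_image.mp hp
    obtain ⟨l, -, rfl⟩ := mem_image.mp hq
    exact disjoint_rotatedPath fun hkl => hpq (congrArg rotatedPath hkl)
end
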